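/- Reductive subtyping is preserved by normalization on both sides: for all MiniJl types τ1 and τ2, if τ1 ≤r τ2 then NF(τ1) ≤r NF(τ2). -/
import Mathlib


/-- MiniJl types -/
inductive Ty : Type
  | pair : Ty → Ty → Ty
  | union : Ty → Ty → Ty
  | int : Ty
  | flt : Ty
  | cmplx : Ty
  | str : Ty
  | real : Ty
  | num : Ty
deriving DecidableEq

/-- Value types: concrete nominal types and pairs of value types. -/
inductive ValTy : Ty → Prop
  | int : ValTy .int
  | flt : ValTy .flt
  | cmplx : ValTy .cmplx
  | str : ValTy .str
  | pair {v1 v2 : Ty} : ValTy v1 → ValTy v2 → ValTy (.pair v1 v2)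

/-- Matching relation `v ⋖ τ`. -/
inductive Matches : Ty → Ty → Prop
  | int : Matches .int .int
  | flt : Matches .flt .flt
  | cmplx : Matches .cmplx .cmplx
  | str : Matches .str .str
  | intReal : Matches .int .real
  | fltReal : Matches .flt .real
  | intNum : Matches .int .num
  | fltNum : Matches .flt .num
  | cmplxNum : Matches .cmplx .num
  | pair {v1 v2 t1 t2 : Ty} : Matches v1 t1 → Matches v2 t2 →
      Matches (.pair v1 v2) (.pair t1 t2)
  | unionL {v t1 t2 : Ty} : Matches v t1 → Matches v (.union t1 t2)
  | unionR {v t1 t2 : Ty} : Matches v t2 → Matches v (.union t1 t2)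

/-- Matching-based semantic subtyping. -/
def SemSub (t1 t2 : Ty) : Prop :=
  ∀ v : Ty, ValTy v → Matches v t1 → Matches v t2

/-- Tag interpretation of types as sets of value types. -/
def interp : Ty → Set Ty
  | .int => {.int}
  | .flt => {.flt}
  | .cmplx => {.cmplx}
  | .str => {.str}
  | .real => {.int, .flt}
  | .num => {.int, .flt, .cmplx}
  | .pair t1 t2 => {v | ∃ v1 ∈ interp t1, ∃ v2 ∈ interp t2, v = .pair v1 v2}
  | .union t1 t2 => interp t1 ∪ interp t2

/-- Declarative subtyping. -/
inductive DeclSub : Ty → Ty → Prop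
  | refl (t : Ty) : DeclSub t t
  | trans {t1 t2 t3 : Ty} : DeclSub t1 t2 → DeclSub t2 t3 → DeclSub t1 t3
  | intReal : DeclSub .int .real
  | fltReal : DeclSub .flt .real
  | realNum : DeclSub .real .num
  | cmplxNum : DeclSub .cmplx .num
  | realUnion : DeclSub .real (.union .int .flt)
  | numUnion : DeclSub .num (.union .real .cmplx)
  | pair {t1 t2 t1' t2' : Ty} : DeclSub t1 t1' → DeclSub t2 t2' →
      DeclSub (.pair t1 t2) (.pair t1' t2')
  | unionL {t1 t2 t' : Ty} : DeclSub t1 t' → DeclSub t2 t' →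
      DeclSub (.union t1 t2) t'
  | unionR1 (t1 t2 : Ty) : DeclSub t1 (.union t1 t2)
  | unionR2 (t1 t2 : Ty) : DeclSub t2 (.union t1 t2)
  | distr1 (t11 t12 t2 : Ty) :
      DeclSub (.pair (.union t11 t12) t2)
        (.union (.pair t11 t2) (.pair t12 t2))
  | distr2 (t1 t21 t22 : Ty) :
      DeclSub (.pair t1 (.union t21 t22))
        (.union (.pair t1 t21) (.pair t1 t22))

/-- Normal form predicate. -/
inductive InNF : Ty → Prop
  | val {v : Ty} : ValTy v → InNF v
  | union {t1 t2 : Ty} : InNF t1 → InNF t2 → InNF (.union t1 t2)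

/-- Union of pairs -/
def unprs : Ty → Ty → Ty
  | .union t11 t12, t2 => .union (unprs t11 t2) (unprs t12 t2)
  | t1, .union t21 t22 => .union (unprs t1 t21) (unprs t1 t22)
  | t1, t2 => .pair t1 t2

/-- Normalization function. -/
def NF : Ty → Ty
  | .int => .int
  | .flt => .flt
  | .cmplx => .cmplx
  | .str => .str
  | .real => .union .int .flt
  | .num => .union (.union .int .flt) .cmplx
  | .pair t1 t2 => unprs (NF t1) (NF t2)
  | .union t1 t2 => .union (NF t1) (NF t2)

/-- Reductive subtyping. -/
inductive RedSub : Ty → Ty → Prop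
  | intRefl : RedSub .int .int
  | fltRefl : RedSub .flt .flt
  | cmplxRefl : RedSub .cmplx .cmplx
  | strRefl : RedSub .str .str
  | intReal : RedSub .int .real
  | fltReal : RedSub .flt .real
  | cmplxNum : RedSub .cmplx .num
  | intNum : RedSub .int .num
  | fltNum : RedSub .flt .num
  | pair {t1 t2 t1' t2' : Ty} : RedSub t1 t1' → RedSub t2 t2' →
      RedSub (.pair t1 t2) (.pair t1' t2')
  | unionL {t1 t2 t' : Ty} : RedSub t1 t' → RedSub t2 t' →
      RedSub (.union t1 t2) t'
  | unionR1 {t t1' t2' : Ty} : RedSub t t1' → RedSub t (.union t1' t2')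
  | unionR2 {t t1' t2' : Ty} : RedSub t t2' → RedSub t (.union t1' t2')
  | nf {t t' : Ty} : RedSub (NF t) t' → RedSub t t'

lemma redSub_refl : ∀ t : Ty, RedSub t t := by
  intro t
  induction t with
  | pair a b iha ihb => exact .pair iha ihb
  | union a b iha ihb => exact .unionL (.unionR1 iha) (.unionR2 ihb)
  | int => exact .intRefl
  | flt => exact .fltRefl
  | cmplx => exact .cmplxRefl
  | str => exact .strRefl
  | real => exact .nf (.unionL .intReal .fltReal)
  | num => exact .nf (.unionL (.unionL .intNum .fltNum) .cmplxNum)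

lemma redSub_union_inv : ∀ {s t : Ty}, RedSub s t → ∀ a b, s = .union a b →
    RedSub a t ∧ RedSub b t := by
  intro s t h
  induction h with
  | unionL h1 h2 _ _ => intro a b e; cases e; exact ⟨h1, h2⟩
  | unionR1 _ ih => intro a b e
                    obtain ⟨h1, h2⟩ := ih a b e
                    exact ⟨.unionR1 h1, .unionR1 h2⟩
  | unionR2 _ ih => intro a b e
                    obtain ⟨h1, h2⟩ := ih a b e
                    exact ⟨.unionR2 h1, .unionR2 h2⟩
  | nf _ ih => intro a b e
               subst e
               obtain ⟨h1, h2⟩ := ih (NF a) (NF b) rfl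
               exact ⟨.nf h1, .nf h2⟩
  | _ => intro a b e; cases e

lemma unprs_sub_pair : ∀ a b {t1' t2' : Ty}, RedSub a t1' → RedSub b t2' →
    RedSub (unprs a b) (.pair t1' t2') := by
  intro a b
  induction a, b using unprs.induct with
  | case1 a1 a2 b ih1 ih2 =>
    intro t1' t2' h1 h2
    obtain ⟨g1, g2⟩ := redSub_union_inv h1 a1 a2 rfl
    simp only [unprs]
    exact .unionL (ih1 g1 h2) (ih2 g2 h2)
  | case2 a b1 b2 _ ih1 ih2 =>
    intro t1' t2' h1 h2
    obtain ⟨g1, g2⟩ := redSub_union_inv h2 b1 b2 rfl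
    have e : unprs a (.union b1 b2) = .union (unprs a b1) (unprs a b2) := by
      cases a <;> simp_all [unprs]
    rw [e]
    exact .unionL (ih1 h1 g1) (ih2 h1 g2)
  | case3 a b h1 h2 =>
    intro t1' t2' g1 g2
    have e : unprs a b = .pair a b := by
      cases a <;> cases b <;> simp_all [unprs]
    rw [e]
    exact .pair g1 g2

lemma NF_val {v : Ty} (hv : ValTy v) : NF v = v := by
  induction hv with
  | pair hv1 hv2 ih1 ih2 =>
    rename_i v1 v2
    show unprs (NF v1) (NF v2) = _
    rw [ih1, ih2]
    cases hv1 <;> cases hv2 <;> simp [unprs]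
  | _ => rfl

lemma val_union_inv : ∀ {v t : Ty}, RedSub v t → ValTy v → ∀ a b,
    t = .union a b → RedSub v a ∨ RedSub v b := by
  intro v t h
  induction h with
  | unionL _ _ _ _ => intro hv; cases hv
  | unionR1 h _ => intro _ a b e; cases e; exact .inl h
  | unionR2 h _ => intro _ a b e; cases e; exact .inr h
  | nf _ ih =>
    intro hv a b e
    rw [NF_val hv] at ih
    exact ih hv a b e
  | _ => intro _ a b e; cases e

lemma pair_sub_unprs : ∀ A B {v1 v2 : Ty}, ValTy v1 → ValTy v2 →
    RedSub v1 A → RedSub v2 B → RedSub (.pair v1 v2) (unprs A B) := by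
  intro A B
  induction A, B using unprs.induct with
  | case1 a1 a2 b ih1 ih2 =>
    intro v1 v2 hv1 hv2 h1 h2
    simp only [unprs]
    rcases val_union_inv h1 hv1 a1 a2 rfl with g | g
    · exact .unionR1 (ih1 hv1 hv2 g h2)
    · exact .unionR2 (ih2 hv1 hv2 g h2)
  | case2 a b1 b2 _ ih1 ih2 =>
    intro v1 v2 hv1 hv2 h1 h2
    have e : unprs a (.union b1 b2) = .union (unprs a b1) (unprs a b2) := by
      cases a <;> simp_all [unprs]
    rw [e]
    rcases val_union_inv h2 hv2 b1 b2 rfl with g | g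
    · exact .unionR1 (ih1 hv1 hv2 h1 g)
    · exact .unionR2 (ih2 hv1 hv2 h1 g)
  | case3 a b h1 h2 =>
    intro v1 v2 hv1 hv2 g1 g2
    have e : unprs a b = .pair a b := by
      cases a <;> cases b <;> simp_all [unprs]
    rw [e]
    exact .pair g1 g2

lemma InNF_unprs : ∀ a b, InNF a → InNF b → InNF (unprs a b) := by
  intro a b
  induction a, b using unprs.induct with
  | case1 a1 a2 b ih1 ih2 =>
    intro ha hb
    simp only [unprs]
    cases ha with
    | val hv => cases hv
    | union h1 h2 => exact .union (ih1 h1 hb) (ih2 h2 hb)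
  | case2 a b1 b2 hna ih1 ih2 =>
    intro ha hb
    have e : unprs a (.union b1 b2) = .union (unprs a b1) (unprs a b2) := by
      cases a <;> simp_all [unprs]
    rw [e]
    cases hb with
    | val hv => cases hv
    | union h1 h2 => exact .union (ih1 ha h1) (ih2 ha h2)
  | case3 a b h1 h2 =>
    intro ha hb
    have e : unprs a b = .pair a b := by
      cases a <;> cases b <;> simp_all [unprs]
    rw [e]
    have va : ValTy a := by cases ha with
      | val hv => exact hv
      | union _ _ => exact absurd rfl (h1 _ _)
    have vb : ValTy b := by cases hb with
      | val hv => exact hv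
      | union _ _ => exact absurd rfl (h2 _ _)
    exact .val (.pair va vb)

lemma InNF_NF : ∀ t : Ty, InNF (NF t) := by
  intro t
  induction t with
  | pair a b iha ihb => exact InNF_unprs _ _ iha ihb
  | union a b iha ihb => exact .union iha ihb
  | int => exact .val .int
  | flt => exact .val .flt
  | cmplx => exact .val .cmplx
  | str => exact .val .str
  | real => exact .union (.val .int) (.val .flt)
  | num => exact .union (.union (.val .int) (.val .flt)) (.val .cmplx)

lemma NF_InNF_fixed {s : Ty} (h : InNF s) : NF s = s := by
  induction h with
  | val hv => exact NF_val hv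
  | union _ _ ih1 ih2 => show Ty.union _ _ = _; rw [ih1, ih2]

lemma redSub_nf_left {t t' : Ty} (h : RedSub t t') : RedSub (NF t) t' := by
  induction h with
  | pair _ _ ih1 ih2 => exact unprs_sub_pair _ _ ih1 ih2
  | unionL _ _ ih1 ih2 => exact .unionL ih1 ih2
  | unionR1 _ ih => exact .unionR1 ih
  | unionR2 _ ih => exact .unionR2 ih
  | nf h _ => exact h
  | intRefl => exact .intRefl
  | fltRefl => exact .fltRefl
  | cmplxRefl => exact .cmplxRefl
  | strRefl => exact .strRefl
  | intReal => exact .intReal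
  | fltReal => exact .fltReal
  | cmplxNum => exact .cmplxNum
  | intNum => exact .intNum
  | fltNum => exact .fltNum

lemma redSub_nf_right : ∀ {s t' : Ty}, RedSub s t' → InNF s → RedSub s (NF t') := by
  intro s t' h
  induction h with
  | pair _ _ ih1 ih2 =>
    intro hs
    cases hs with
    | val hv =>
      cases hv with
      | pair hv1 hv2 =>
        exact pair_sub_unprs _ _ hv1 hv2 (ih1 (.val hv1)) (ih2 (.val hv2))
  | unionL _ _ ih1 ih2 =>
    intro hs
    cases hs with
    | val hv => cases hv
    | union h1 h2 => exact .unionL (ih1 h1) (ih2 h2)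
  | unionR1 _ ih => intro hs; exact .unionR1 (ih hs)
  | unionR2 _ ih => intro hs; exact .unionR2 (ih hs)
  | nf _ ih =>
    intro hs
    rw [NF_InNF_fixed hs] at ih
    exact ih hs
  | intRefl => intro _; exact .intRefl
  | fltRefl => intro _; exact .fltRefl
  | cmplxRefl => intro _; exact .cmplxRefl
  | strRefl => intro _; exact .strRefl
  | intReal => intro _; exact .unionR1 .intRefl
  | fltReal => intro _; exact .unionR2 .fltRefl
  | cmplxNum => intro _; exact .unionR2 .cmplxRefl
  | intNum => intro _; exact .unionR1 (.unionR1 .intRefl)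
  | fltNum => intro _; exact .unionR1 (.unionR2 .fltRefl)

theorem redSub_nf_both (t1 t2 : Ty) (h : RedSub t1 t2) :
    RedSub (NF t1) (NF t2) := by
  exact redSub_nf_right (redSub_nf_left h) (InNF_NF t1)
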